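/- arXiv:1309.4421 — 4 statements merged into one kernel-verified Lean document; each statement's English description precedes it below -/
import Mathlib

section
/- If s and t are integers with s ≢ t (mod 2), then 2(s^4 + 2s^3 t + 2s t^3 + t^4) is not a fifth power of an integer. -/
theorem no_fifth_power (s t : ℤ) (h : ¬ s ≡ t [ZMOD 2]) :
    ¬ ∃ u : ℤ, u ^ 5 = 2 * (s ^ 4 + 2 * s ^ 3 * t + 2 * s * t ^ 3 + t ^ 4) := by
  rintro ⟨u, hu⟩
  rw [Int.ModEq] at h
  -- exactly one of s, t is odd
  have hst : Odd (s ^ 4 + t ^ 4) := by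
    rcases Int.even_or_odd s with hs | hs <;> rcases Int.even_or_odd t with ht | ht
    · rw [Int.even_iff] at hs ht; exact absurd (by omega) h
    · exact (Int.even_pow.mpr ⟨hs, by norm_num⟩).add_odd ht.pow
    · exact hs.pow.add_even (Int.even_pow.mpr ⟨ht, by norm_num⟩)
    · rw [Int.odd_iff] at hs ht; exact absurd (by omega) h
  have hE : Odd (s ^ 4 + 2 * s ^ 3 * t + 2 * s * t ^ 3 + t ^ 4) := by
    have h2 : Even (2 * s ^ 3 * t + 2 * s * t ^ 3) := ⟨s ^ 3 * t + s * t ^ 3, by ring⟩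
    have h3 := hst.add_even h2
    have : s ^ 4 + 2 * s ^ 3 * t + 2 * s * t ^ 3 + t ^ 4
        = s ^ 4 + t ^ 4 + (2 * s ^ 3 * t + 2 * s * t ^ 3) := by ring
    rwa [this]
  obtain ⟨k, hk⟩ := hE
  rw [hk] at hu
  have hue : Even u := by
    have : Even (u ^ 5) := ⟨2 * k + 1, by rw [hu]; ring⟩
    exact (Int.even_pow.mp this).1
  obtain ⟨c, rfl⟩ := hue
  have h32 : 32 * c ^ 5 = 4 * k + 2 := by linear_combination hu
  have : ¬ (32 * c ^ 5 = 4 * k + 2) := by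
    generalize c ^ 5 = m
    omega
  exact this h32
end

section
/- If s and t are coprime integers with s odd and s ≢ t (mod 3), and u^5 = s(s+2t)(s^2 - 2st + 4t^2) for some integer u, then there exist pairwise coprime integers w1, w2, w3 with s = w1^5, s + 2t = w2^5, and s^2 - 2st + 4t^2 = w3^5. -/
private lemma pow5_of_coprime (a b c : ℤ) (h : IsCoprime a b) (habc : a * b = c ^ 5) :
    ∃ d : ℤ, a = d ^ 5 := by
  obtain ⟨d, hd⟩ := exists_associated_pow_of_mul_eq_pow' h habc
  rcases Int.associated_iff.mp hd with h1 | h1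
  · exact ⟨d, h1.symm⟩
  · exact ⟨-d, by rw [Odd.neg_pow ⟨2, by norm_num⟩, h1, neg_neg]⟩

theorem factors_are_fifth_powers (s t u : ℤ) (hco : IsCoprime s t) (hs : Odd s)
    (h3 : ¬ s ≡ t [ZMOD 3])
    (h : u ^ 5 = s * (s + 2 * t) * (s ^ 2 - 2 * s * t + 4 * t ^ 2)) :
    ∃ w1 w2 w3 : ℤ, IsCoprime w1 w2 ∧ IsCoprime w1 w3 ∧ IsCoprime w2 w3 ∧
      s = w1 ^ 5 ∧ s + 2 * t = w2 ^ 5 ∧ s ^ 2 - 2 * s * t + 4 * t ^ 2 = w3 ^ 5 := by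
  obtain ⟨k, hk⟩ := hs
  have h2s : IsCoprime s 2 := ⟨1, -k, by omega⟩
  have hst2 : IsCoprime s (2 * t) := h2s.mul_right hco
  -- coprimality of s with s + 2t
  have hAB : IsCoprime s (s + 2 * t) := by
    have := hst2.add_mul_left_right 1
    rwa [show 2 * t + s * 1 = s + 2 * t by ring] at this
  -- coprimality of s with the quadratic factor
  have hAC : IsCoprime s (s ^ 2 - 2 * s * t + 4 * t ^ 2) := by
    have := (hst2.pow_right (n := 2)).add_mul_left_right (s - 2 * t)
    have e : (2 * t) ^ 2 + s * (s - 2 * t) = s ^ 2 - 2 * s * t + 4 * t ^ 2 := by ring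
    rwa [e] at this
  -- s + 2t is odd and not divisible by 3
  have h2B : IsCoprime (s + 2 * t) 2 := ⟨1, -k - t, by omega⟩
  have h3B : IsCoprime (s + 2 * t) 3 := by
    rw [isCoprime_comm]
    rw [Int.prime_three.coprime_iff_not_dvd]
    simp only [Int.ModEq] at h3
    omega
  have htB : IsCoprime (s + 2 * t) t := by
    have := hco.add_mul_left_left 2
    rwa [show s + t * 2 = s + 2 * t by ring] at this
  have hBC : IsCoprime (s + 2 * t) (s ^ 2 - 2 * s * t + 4 * t ^ 2) := by
    have h12 : IsCoprime (s + 2 * t) (12 * t ^ 2) := by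
      have : IsCoprime (s + 2 * t) (12 : ℤ) := by
        have : (12 : ℤ) = 2 * 2 * 3 := by norm_num
        rw [this]
        exact ((h2B.mul_right h2B).mul_right h3B)
      exact this.mul_right (htB.pow_right)
    have := h12.add_mul_left_right (s - 4 * t)
    have e : 12 * t ^ 2 + (s + 2 * t) * (s - 4 * t) = s ^ 2 - 2 * s * t + 4 * t ^ 2 := by
      ring
    rwa [e] at this
  -- split the product
  have hprod : (s * (s + 2 * t)) * (s ^ 2 - 2 * s * t + 4 * t ^ 2) = u ^ 5 := h.symm
  obtain ⟨e, he⟩ := pow5_of_coprime _ _ _ (hAC.mul_left hBC) hprod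
  obtain ⟨w3, hw3⟩ := pow5_of_coprime _ _ _ (hAC.mul_left hBC).symm (by rw [mul_comm]; exact hprod)
  obtain ⟨w1, hw1⟩ := pow5_of_coprime _ _ _ hAB he
  obtain ⟨w2, hw2⟩ := pow5_of_coprime _ _ _ hAB.symm (by rw [mul_comm]; exact he)
  refine ⟨w1, w2, w3, ?_, ?_, ?_, hw1, hw2, hw3⟩
  · exact IsCoprime.of_isCoprime_of_dvd_right
      (IsCoprime.of_isCoprime_of_dvd_left (hw1 ▸ hw2 ▸ hAB) (dvd_pow_self w1 (by norm_num)))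
      (dvd_pow_self w2 (by norm_num))
  · exact IsCoprime.of_isCoprime_of_dvd_right
      (IsCoprime.of_isCoprime_of_dvd_left (hw1 ▸ hw3 ▸ hAC) (dvd_pow_self w1 (by norm_num)))
      (dvd_pow_self w3 (by norm_num))
  · exact IsCoprime.of_isCoprime_of_dvd_right
      (IsCoprime.of_isCoprime_of_dvd_left (hw2 ▸ hw3 ▸ hBC) (dvd_pow_self w2 (by norm_num)))
      (dvd_pow_self w3 (by norm_num))
end

section
/- If s, t are coprime integers, then for any integers v, w, the equation 2(s^2 + 2t^2) = w(5v^4 + 30v^2 w^2 + 9w^4) with v odd and w even has no solution, because every odd prime divisor p of s^2 + 2t^2 (with gcd(s,t)=1) satisfies p ≡ 1 or 3 (mod 8), while 5v^4 + 30v^2w^2 + 9w^4 ≡ 5 (mod 8). -/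
private lemma aux_mod8 (n : ℕ) (hn : Odd n)
    (hp : ∀ p : ℕ, p.Prime → p ∣ n → p % 8 = 1 ∨ p % 8 = 3) :
    n % 8 = 1 ∨ n % 8 = 3 := by
  induction n using Nat.strong_induction_on with
  | _ n ih =>
    rcases eq_or_ne n 1 with rfl | h1
    · left; rfl
    have hn0 : n ≠ 0 := by rintro rfl; simp [Nat.odd_iff] at hn
    have hpmin : (Nat.minFac n).Prime := Nat.minFac_prime h1
    obtain ⟨m, hm⟩ := Nat.minFac_dvd n
    have hp2 : 2 ≤ Nat.minFac n := hpmin.two_le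
    have hmlt : m < n := by
      have hm0 : m ≠ 0 := by rintro rfl; simp at hm; exact hn0 hm
      calc m < 2 * m := by omega
        _ ≤ Nat.minFac n * m := Nat.mul_le_mul_right m hp2
        _ = n := hm.symm
    have hmodd : Odd m := (Nat.odd_mul.mp (hm ▸ hn)).2
    have hmh : ∀ p : ℕ, p.Prime → p ∣ m → p % 8 = 1 ∨ p % 8 = 3 := by
      intro p pp pd
      exact hp p pp (pd.trans ⟨Nat.minFac n, hm.trans (Nat.mul_comm _ _)⟩)
    have hmres := ih m hmlt hmodd hmh
    have hpres := hp (Nat.minFac n) hpmin (Nat.minFac_dvd n)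
    have hkey : n % 8 = (Nat.minFac n % 8) * (m % 8) % 8 := by
      conv_lhs => rw [hm]
      rw [Nat.mul_mod]
    rcases hmres with h | h <;> rcases hpres with h' | h' <;>
      rw [h, h'] at hkey <;> omega

private lemma prime_mod8 (s t : ℤ) (hco : IsCoprime s t) (p : ℕ) (pp : p.Prime)
    (hpodd : p ≠ 2) (hdvd : (p : ℤ) ∣ s ^ 2 + 2 * t ^ 2) :
    p % 8 = 1 ∨ p % 8 = 3 := by
  haveI : Fact p.Prime := ⟨pp⟩
  rw [← ZMod.exists_sq_eq_neg_two_iff hpodd]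
  have h0 : ((s : ZMod p)) ^ 2 + 2 * (t : ZMod p) ^ 2 = 0 := by
    have := (ZMod.intCast_zmod_eq_zero_iff_dvd _ p).mpr hdvd
    push_cast at this
    exact this
  have ht : (t : ZMod p) ≠ 0 := by
    intro ht0
    have hpt : (p : ℤ) ∣ t := by
      rwa [← ZMod.intCast_zmod_eq_zero_iff_dvd]
    have h2t : (p : ℤ) ∣ 2 * t ^ 2 := Dvd.dvd.mul_left (hpt.pow (by norm_num)) 2
    have hps2 : (p : ℤ) ∣ s ^ 2 := by
      rw [show s ^ 2 = (s ^ 2 + 2 * t ^ 2) - 2 * t ^ 2 by ring]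
      exact dvd_sub hdvd h2t
    have hps : (p : ℤ) ∣ s := Int.Prime.dvd_pow' (by exact_mod_cast pp) hps2
    have hu : IsUnit (p : ℤ) := hco.isUnit_of_dvd' hps hpt
    rw [Int.isUnit_iff] at hu
    have := pp.two_le
    omega
  refine ⟨(s : ZMod p) * (t : ZMod p)⁻¹, ?_⟩
  field_simp
  linear_combination -h0

theorem case6_j2_no_solution (s t v w : ℤ) (hco : IsCoprime s t)
    (hv : Odd v) (hw : Even w)
    (h : 2 * (s ^ 2 + 2 * t ^ 2) = w * (5 * v ^ 4 + 30 * v ^ 2 * w ^ 2 + 9 * w ^ 4)) :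
    False := by
  obtain ⟨a, rfl⟩ := hv
  obtain ⟨b, rfl⟩ := hw
  set M : ℤ := 5 * (2 * a + 1) ^ 4 + 30 * (2 * a + 1) ^ 2 * (b + b) ^ 2 + 9 * (b + b) ^ 4 with hM
  have hx : 1 ≤ (2 * a + 1) ^ 2 := by
    have h0 : 0 ≤ a * (a + 1) := by
      rcases le_or_gt 0 a with h' | h'
      · exact mul_nonneg h' (by omega)
      · have := mul_nonneg (a := -a) (b := -(a+1)) (by omega) (by omega)
        nlinarith [this]
    nlinarith [h0]
  have hx0 : (0 : ℤ) ≤ (2 * a + 1) ^ 2 := by linarith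
  have hy : (0 : ℤ) ≤ (b + b) ^ 2 := sq_nonneg _
  have hMpos : 0 < M := by
    have hxy : (0 : ℤ) ≤ (2 * a + 1) ^ 2 * (b + b) ^ 2 := mul_nonneg hx0 hy
    have hyy : (0 : ℤ) ≤ ((b + b) ^ 2) ^ 2 := sq_nonneg _
    have hxx : (1 : ℤ) ≤ ((2 * a + 1) ^ 2) ^ 2 := by nlinarith
    nlinarith
  have hMmod : M % 8 = 5 := by
    have h1 : M = 8 * (10 * a ^ 4 + 20 * a ^ 3 + 15 * a ^ 2 + 5 * a
        + 60 * a ^ 2 * b ^ 2 + 60 * a * b ^ 2 + 15 * b ^ 2 + 18 * b ^ 4) + 5 := by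
      rw [hM]; ring
    omega
  have hNM : (M : ℤ) ∣ s ^ 2 + 2 * t ^ 2 := by
    refine ⟨b, ?_⟩
    have h2 : 2 * (s ^ 2 + 2 * t ^ 2) = 2 * (M * b) := by linear_combination h
    exact mul_left_cancel₀ two_ne_zero h2
  set N : ℤ := s ^ 2 + 2 * t ^ 2 with hN
  have hMnat : (M.natAbs : ℤ) = M := Int.natAbs_of_nonneg hMpos.le
  have hMnatmod : M.natAbs % 8 = 5 := by omega
  have hModd : Odd M.natAbs := by rw [Nat.odd_iff]; omega
  have := aux_mod8 M.natAbs hModd (fun p pp pd => by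
    have hpN : (p : ℤ) ∣ N := by
      have h' : (p : ℤ) ∣ (M.natAbs : ℤ) := Int.natCast_dvd_natCast.mpr pd
      rw [hMnat] at h'
      exact h'.trans hNM
    have hp2 : p ≠ 2 := by
      rintro rfl
      have h2 : (2 : ℕ) ∣ M.natAbs := pd
      omega
    exact prime_mod8 s t hco p pp hp2 hpN)
  omega
end

section
/- If s, t are coprime integers with 2s^2 = -4v^5 + 35v^4 w - 120v^3 w^2 + 210v^2 w^3 - 180v w^4 + 63w^5 and 2t^2 = 2v^5 - 15v^4 w + 60v^3 w^2 - 90v^2 w^3 + 90v w^4 - 27w^5 for integers v, w with s ≢ t (mod 2), then v is odd and w is even. -/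
private lemma zmod8_key : ∀ S T V W : ZMod 8,
    (ZMod.castHom (by norm_num : (2:ℕ) ∣ 8) (ZMod 2)) S ≠
      (ZMod.castHom (by norm_num : (2:ℕ) ∣ 8) (ZMod 2)) T →
    2 * S ^ 2 = -4 * V ^ 5 + 35 * V ^ 4 * W - 120 * V ^ 3 * W ^ 2
        + 210 * V ^ 2 * W ^ 3 - 180 * V * W ^ 4 + 63 * W ^ 5 →
    2 * T ^ 2 = 2 * V ^ 5 - 15 * V ^ 4 * W + 60 * V ^ 3 * W ^ 2
        - 90 * V ^ 2 * W ^ 3 + 90 * V * W ^ 4 - 27 * W ^ 5 →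
    (ZMod.castHom (by norm_num : (2:ℕ) ∣ 8) (ZMod 2)) V = 1 ∧
      (ZMod.castHom (by norm_num : (2:ℕ) ∣ 8) (ZMod 2)) W = 0 := by decide

theorem v_odd_w_even (s t v w : ℤ) (hco : IsCoprime s t) (hpar : ¬ s ≡ t [ZMOD 2])
    (h1 : 2 * s ^ 2 = -4 * v ^ 5 + 35 * v ^ 4 * w - 120 * v ^ 3 * w ^ 2
        + 210 * v ^ 2 * w ^ 3 - 180 * v * w ^ 4 + 63 * w ^ 5)
    (h2 : 2 * t ^ 2 = 2 * v ^ 5 - 15 * v ^ 4 * w + 60 * v ^ 3 * w ^ 2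
        - 90 * v ^ 2 * w ^ 3 + 90 * v * w ^ 4 - 27 * w ^ 5) :
    Odd v ∧ Even w := by
  have hcast : ∀ a : ℤ, (ZMod.castHom (by norm_num : (2:ℕ) ∣ 8) (ZMod 2)) (a : ZMod 8)
      = (a : ZMod 2) := by
    intro a
    simp [ZMod.castHom_apply, ZMod.intCast_cast, ZMod.intCast_zmod_cast]
  have hne : (s : ZMod 2) ≠ (t : ZMod 2) := by
    rwa [Ne, ZMod.intCast_eq_intCast_iff]
  have e1 : (2 : ZMod 8) * (s : ZMod 8) ^ 2 = -4 * (v:ZMod 8) ^ 5 + 35 * (v:ZMod 8) ^ 4 * w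
      - 120 * (v:ZMod 8) ^ 3 * (w:ZMod 8) ^ 2 + 210 * (v:ZMod 8) ^ 2 * (w:ZMod 8) ^ 3
      - 180 * (v:ZMod 8) * (w:ZMod 8) ^ 4 + 63 * (w:ZMod 8) ^ 5 := by
    exact_mod_cast congrArg (Int.cast : ℤ → ZMod 8) h1
  have e2 : (2 : ZMod 8) * (t : ZMod 8) ^ 2 = 2 * (v:ZMod 8) ^ 5 - 15 * (v:ZMod 8) ^ 4 * w
      + 60 * (v:ZMod 8) ^ 3 * (w:ZMod 8) ^ 2 - 90 * (v:ZMod 8) ^ 2 * (w:ZMod 8) ^ 3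
      + 90 * (v:ZMod 8) * (w:ZMod 8) ^ 4 - 27 * (w:ZMod 8) ^ 5 := by
    exact_mod_cast congrArg (Int.cast : ℤ → ZMod 8) h2
  have key := zmod8_key (s : ZMod 8) (t : ZMod 8) (v : ZMod 8) (w : ZMod 8)
    (by rw [hcast, hcast]; exact hne) e1 e2
  rw [hcast, hcast] at key
  constructor
  · rw [Int.odd_iff]
    have := key.1
    rw [show (1 : ZMod 2) = ((1:ℤ) : ZMod 2) by norm_num, ZMod.intCast_eq_intCast_iff, Int.ModEq] at this
    omega
  · rw [Int.even_iff]
    have := key.2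
    rw [show (0 : ZMod 2) = ((0:ℤ) : ZMod 2) by norm_num, ZMod.intCast_eq_intCast_iff, Int.ModEq] at this
    omega
end
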